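/- arXiv:1108.3311 — 6 statements merged into one kernel-verified Lean document; each statement's English description precedes it below -/
import Mathlib

section
/- Let (G,<) be an ordered group and let (N,H) be a convex jump, i.e., N ⊊ H are convex subgroups of G with no convex subgroup strictly between them. Then N is a normal subgroup of H and the ordered quotient group H/N is archimedean, hence order-isomorphic to a subgroup of the additive group of real numbers. -/
/-!
Convex subgroups of an ordered group form a chain. Hence for `g ∈ H \ N` with `1 < g`, the convex
subgroup of elements bounded by powers of `g` lies strictly above `N`, so it is `H`: `g` is
cofinal in `H`. In an ordered group with a cofinal element `g > 1`, the translation number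
`τ a = lim_n m(a, n) / n`, where `m(a, n)` is the largest `m` with `g ^ m ≤ a ^ n`, exists by
Fekete's lemma. It is additive because `(a * b) ^ n` lies between `a ^ n * b ^ n` and
`b ^ n * a ^ n`, and it is monotone. Its kernel consists of the `a` with `|a| ^ n < g` for all
`n`, which by the jump property is exactly `N`; being a kernel, `N` is normal in `H`.
-/

def IsConvexSubgroup {G : Type*} [Group G] (le : G → G → Prop) (H : Subgroup G) : Prop :=
  ∀ x z : G, x ∈ H → z ∈ H → ∀ y : G, le x y → le y z → y ∈ H

open Filter Topology OrderDual

instance Subgroup.mulLeftMono {G : Type*} [Group G] [LE G] [MulLeftMono G] (H : Subgroup G) :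
    MulLeftMono H :=
  ⟨fun a _ _ h => mul_le_mul_right (α := G) h a⟩

instance Subgroup.mulRightMono {G : Type*} [Group G] [LE G] [MulRightMono G] (H : Subgroup G) :
    MulRightMono H :=
  ⟨fun a _ _ h => mul_le_mul_left (α := G) h a⟩

section ConvexSubgroups

variable {G : Type*} [Group G] [LinearOrder G]

theorem Subgroup.mabs_mem_iff (A : Subgroup G) {x : G} : |x|ₘ ∈ A ↔ x ∈ A := by
  rcases mabs_choice x with h | h <;> simp [h]

variable [MulLeftMono G] [MulRightMono G] {N H : Subgroup G}

theorem IsConvexSubgroup.mem_of_mabs_le {A : Subgroup G} (hA : IsConvexSubgroup (· ≤ ·) A)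
    {x y : G} (hy : y ∈ A) (hxy : |x|ₘ ≤ y) : x ∈ A :=
  hA y⁻¹ y (A.inv_mem hy) hy x (inv_le_of_inv_le' ((inv_le_mabs x).trans hxy))
    ((le_mabs_self x).trans hxy)

theorem IsConvexSubgroup.le_or_le {A B : Subgroup G} (hA : IsConvexSubgroup (· ≤ ·) A)
    (hB : IsConvexSubgroup (· ≤ ·) B) : A ≤ B ∨ B ≤ A := by
  by_contra! ⟨hAB, hBA⟩
  obtain ⟨a, haA, haB⟩ := SetLike.not_le_iff_exists.1 hAB
  obtain ⟨b, hbB, hbA⟩ := SetLike.not_le_iff_exists.1 hBA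
  rcases le_total |a|ₘ |b|ₘ with h | h
  · exact haB (hB.mem_of_mabs_le (B.mabs_mem_iff.2 hbB) h)
  · exact hbA (hA.mem_of_mabs_le (A.mabs_mem_iff.2 haA) h)

def boundedByPowers (z : G) : Subgroup G where
  carrier := {x | ∃ n : ℕ, |x|ₘ ≤ z ^ n}
  one_mem' := ⟨0, by simp⟩
  mul_mem' := by
    rintro x y ⟨j, hj⟩ ⟨k, hk⟩
    refine ⟨j + k, mabs_le'.2 ⟨?_, ?_⟩⟩
    · rw [pow_add]
      exact mul_le_mul' ((le_mabs_self x).trans hj) ((le_mabs_self y).trans hk)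
    · rw [mul_inv_rev, add_comm, pow_add]
      exact mul_le_mul' ((inv_le_mabs y).trans hk) ((inv_le_mabs x).trans hj)
  inv_mem' := by simp

theorem isConvexSubgroup_boundedByPowers {z : G} (hz : 1 ≤ z) :
    IsConvexSubgroup (· ≤ ·) (boundedByPowers z) := by
  rintro x w ⟨j, hj⟩ ⟨k, hk⟩ y hxy hyw
  refine ⟨j + k, mabs_le'.2 ⟨?_, ?_⟩⟩
  · exact hyw.trans ((le_mabs_self w).trans (hk.trans (pow_le_pow_right' hz (by omega))))
  · exact (inv_le_inv_iff.2 hxy).trans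
      ((inv_le_mabs x).trans (hj.trans (pow_le_pow_right' hz (by omega))))

theorem exists_le_pow_of_convexJump (hN : IsConvexSubgroup (· ≤ ·) N)
    (hH : IsConvexSubgroup (· ≤ ·) H)
    (hjump : ∀ M : Subgroup G, IsConvexSubgroup (· ≤ ·) M → N ≤ M → M ≤ H → M = N ∨ M = H)
    {z : G} (hz : 1 ≤ z) (hzH : z ∈ H) (hzN : z ∉ N) {x : G} (hx : x ∈ H) :
    ∃ n : ℕ, x ≤ z ^ n := by
  have hzB : z ∈ boundedByPowers z := ⟨1, by rw [mabs_of_one_le hz, pow_one]⟩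
  have hBH : boundedByPowers z ≤ H := fun y ⟨n, hn⟩ => hH.mem_of_mabs_le (H.pow_mem hzH n) hn
  have hNB : N ≤ boundedByPowers z :=
    (hN.le_or_le (isConvexSubgroup_boundedByPowers hz)).resolve_right fun h => hzN (h hzB)
  rcases hjump _ (isConvexSubgroup_boundedByPowers hz) hNB hBH with h | h
  · exact absurd (h ▸ hzB) hzN
  · obtain ⟨n, hn⟩ := (h ▸ hx : x ∈ boundedByPowers z)
    exact ⟨n, (le_mabs_self x).trans hn⟩

theorem IsConvexSubgroup.mem_iff_forall_mabs_pow_lt (hN : IsConvexSubgroup (· ≤ ·) N)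
    (hH : IsConvexSubgroup (· ≤ ·) H)
    (hjump : ∀ M : Subgroup G, IsConvexSubgroup (· ≤ ·) M → N ≤ M → M ≤ H → M = N ∨ M = H)
    {g : G} (hg : 1 ≤ g) (hgH : g ∈ H) (hgN : g ∉ N) {x : G} (hx : x ∈ H) :
    x ∈ N ↔ ∀ n : ℕ, |x|ₘ ^ n < g := by
  refine ⟨fun hxN n => lt_of_not_ge fun h => hgN ?_, fun h => by_contra fun hxN => ?_⟩
  · exact hN.mem_of_mabs_le (N.pow_mem (N.mabs_mem_iff.2 hxN) n) (by rwa [mabs_of_one_le hg])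
  · obtain ⟨n, hn⟩ := exists_le_pow_of_convexJump hN hH hjump (one_le_mabs x)
      (H.mabs_mem_iff.2 hx) (mt N.mabs_mem_iff.1 hxN) hgH
    exact (h n).not_ge hn

end ConvexSubgroups

section OrderedGroup

variable {K : Type*} [Group K] [LinearOrder K] [MulLeftMono K]

theorem zpow_right_strictMono_of_one_lt {g : K} (hg : 1 < g) : StrictMono fun m : ℤ => g ^ m :=
  strictMono_int_of_lt_succ fun m => by
    rw [zpow_add_one]
    exact lt_mul_of_one_lt_right' _ hg

variable [MulRightMono K]

theorem pow_mul_le_mul_pow_of_mul_le {a b : K} (h : b * a ≤ a * b) (n : ℕ) :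
    b ^ n * a ≤ a * b ^ n := by
  induction n with
  | zero => simp
  | succ n ih =>
    calc b ^ (n + 1) * a = b * (b ^ n * a) := by rw [pow_succ', mul_assoc]
      _ ≤ b * (a * b ^ n) := mul_le_mul_right ih b
      _ = b * a * b ^ n := (mul_assoc _ _ _).symm
      _ ≤ a * b * b ^ n := mul_le_mul_left h _
      _ = a * b ^ (n + 1) := by rw [pow_succ', mul_assoc]

theorem mul_pow_le_pow_mul_pow_of_mul_le {a b : K} (h : b * a ≤ a * b) (n : ℕ) :
    (a * b) ^ n ≤ a ^ n * b ^ n := by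
  induction n with
  | zero => simp
  | succ n ih =>
    calc (a * b) ^ (n + 1) = (a * b) ^ n * (a * b) := pow_succ _ _
      _ ≤ a ^ n * b ^ n * (a * b) := mul_le_mul_left ih _
      _ = a ^ n * (b ^ n * a) * b := by group
      _ ≤ a ^ n * (a * b ^ n) * b :=
        mul_le_mul_left (mul_le_mul_right (pow_mul_le_mul_pow_of_mul_le h n) _) _
      _ = a ^ (n + 1) * b ^ (n + 1) := by group

theorem pow_mul_pow_le_mul_pow_of_mul_le {a b : K} (h : b * a ≤ a * b) (n : ℕ) :
    b ^ n * a ^ n ≤ (a * b) ^ n := by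
  -- the previous lemma in `Kᵒᵈ`, with `a` and `b` swapped, gives `b ^ n * a ^ n ≤ (b * a) ^ n`
  have h' : toDual a * toDual b ≤ toDual b * toDual a := h
  exact le_trans (mul_pow_le_pow_mul_pow_of_mul_le h' n) (pow_le_pow_left' h n)

theorem mul_pow_mem_uIcc (a b : K) (n : ℕ) :
    (a * b) ^ n ∈ Set.uIcc (a ^ n * b ^ n) (b ^ n * a ^ n) := by
  rcases le_total (b * a) (a * b) with h | h
  · exact Set.mem_uIcc.2 <| .inr
      ⟨pow_mul_pow_le_mul_pow_of_mul_le h n, mul_pow_le_pow_mul_pow_of_mul_le h n⟩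
  · have h' : toDual b * toDual a ≤ toDual a * toDual b := h
    exact Set.mem_uIcc.2 <| .inl
      ⟨mul_pow_le_pow_mul_pow_of_mul_le h' n, pow_mul_pow_le_mul_pow_of_mul_le h' n⟩

/-- The largest `m` with `g ^ m ≤ x`; a junk value of `sSup` unless `1 < g` is cofinal. -/
noncomputable def floorLog (g x : K) : ℤ := sSup {m : ℤ | g ^ m ≤ x}

variable {g : K}

theorem le_floorLog_iff (hg : 1 < g) (hcof : ∀ x : K, ∃ n : ℕ, x ≤ g ^ n) {x : K} {m : ℤ} :
    m ≤ floorLog g x ↔ g ^ m ≤ x := by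
  have hmono := zpow_right_strictMono_of_one_lt hg
  have hne : {m : ℤ | g ^ m ≤ x}.Nonempty := by
    obtain ⟨n, hn⟩ := hcof x⁻¹
    exact ⟨-n, show g ^ (-n : ℤ) ≤ x by rw [zpow_neg, zpow_natCast]; exact inv_le_of_inv_le' hn⟩
  have hbdd : BddAbove {m : ℤ | g ^ m ≤ x} := by
    obtain ⟨n, hn⟩ := hcof x
    refine ⟨n, fun m hm => hmono.le_iff_le.1 ?_⟩
    simpa using hm.trans hn
  exact ⟨fun hm => (hmono.monotone hm).trans (Int.csSup_mem hne hbdd), fun hm => le_csSup hbdd hm⟩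

theorem zpow_floorLog_le (hg : 1 < g) (hcof : ∀ x : K, ∃ n : ℕ, x ≤ g ^ n) (x : K) :
    g ^ floorLog g x ≤ x :=
  (le_floorLog_iff hg hcof).1 le_rfl

theorem lt_zpow_floorLog_add_one (hg : 1 < g) (hcof : ∀ x : K, ∃ n : ℕ, x ≤ g ^ n) (x : K) :
    x < g ^ (floorLog g x + 1) :=
  lt_of_not_ge fun h => by linarith [(le_floorLog_iff hg hcof).2 h]

theorem floorLog_mono (hg : 1 < g) (hcof : ∀ x : K, ∃ n : ℕ, x ≤ g ^ n) :
    Monotone (floorLog g) := fun _ _ hxy =>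
  (le_floorLog_iff hg hcof).2 ((zpow_floorLog_le hg hcof _).trans hxy)

theorem floorLog_zpow (hg : 1 < g) (hcof : ∀ x : K, ∃ n : ℕ, x ≤ g ^ n) (m : ℤ) :
    floorLog g (g ^ m) = m :=
  le_antisymm ((zpow_right_strictMono_of_one_lt hg).le_iff_le.1 (zpow_floorLog_le hg hcof _))
    ((le_floorLog_iff hg hcof).2 le_rfl)

theorem add_floorLog_le_floorLog_mul (hg : 1 < g) (hcof : ∀ x : K, ∃ n : ℕ, x ≤ g ^ n)
    (x y : K) : floorLog g x + floorLog g y ≤ floorLog g (x * y) := by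
  rw [le_floorLog_iff hg hcof, zpow_add]
  exact mul_le_mul' (zpow_floorLog_le hg hcof x) (zpow_floorLog_le hg hcof y)

theorem floorLog_mul_le (hg : 1 < g) (hcof : ∀ x : K, ∃ n : ℕ, x ≤ g ^ n) (x y : K) :
    floorLog g (x * y) ≤ floorLog g x + floorLog g y + 1 := by
  by_contra! h
  have hlt : x * y < g ^ (floorLog g x + 1) * g ^ (floorLog g y + 1) :=
    mul_lt_mul_of_lt_of_lt (lt_zpow_floorLog_add_one hg hcof x)
      (lt_zpow_floorLog_add_one hg hcof y)
  rw [← zpow_add] at hlt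
  exact hlt.not_ge ((le_floorLog_iff hg hcof).1 (by omega))

theorem floorLog_mul_pow_mem_Icc (hg : 1 < g) (hcof : ∀ x : K, ∃ n : ℕ, x ≤ g ^ n)
    (a b : K) (n : ℕ) :
    floorLog g ((a * b) ^ n) ∈ Set.Icc (floorLog g (a ^ n) + floorLog g (b ^ n))
      (floorLog g (a ^ n) + floorLog g (b ^ n) + 1) := by
  have hab := add_floorLog_le_floorLog_mul hg hcof (a ^ n) (b ^ n)
  have hba := add_floorLog_le_floorLog_mul hg hcof (b ^ n) (a ^ n)
  have hab' := floorLog_mul_le hg hcof (a ^ n) (b ^ n)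
  have hba' := floorLog_mul_le hg hcof (b ^ n) (a ^ n)
  rcases Set.mem_uIcc.1 (mul_pow_mem_uIcc a b n) with ⟨h₁, h₂⟩ | ⟨h₁, h₂⟩ <;>
  · have := floorLog_mono hg hcof h₁
    have := floorLog_mono hg hcof h₂
    constructor <;> omega

theorem tendsto_div_of_le_of_le_add {u v : ℕ → ℝ} {L C : ℝ}
    (hu : Tendsto (fun n : ℕ => u n / n) atTop (𝓝 L)) (h₁ : ∀ n, u n ≤ v n)
    (h₂ : ∀ n, v n ≤ u n + C) : Tendsto (fun n : ℕ => v n / n) atTop (𝓝 L) := by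
  refine tendsto_of_tendsto_of_tendsto_of_le_of_le hu
    (by simpa using hu.add (tendsto_const_div_atTop_nhds_zero_nat C))
    (fun n => div_le_div_of_nonneg_right (h₁ n) n.cast_nonneg) fun n => ?_
  rw [← add_div]
  exact div_le_div_of_nonneg_right (h₂ n) n.cast_nonneg

noncomputable def translationNumber (g a : K) : ℝ :=
  limUnder atTop fun n : ℕ => (floorLog g (a ^ n) : ℝ) / n

theorem tendsto_translationNumber (hg : 1 < g) (hcof : ∀ x : K, ∃ n : ℕ, x ≤ g ^ n) (a : K) :
    Tendsto (fun n : ℕ => (floorLog g (a ^ n) : ℝ) / n) atTop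
      (𝓝 (translationNumber g a)) := by
  have hsub : Subadditive fun n => -(floorLog g (a ^ n) : ℝ) := fun p q => by
    have hsuper := add_floorLog_le_floorLog_mul hg hcof (a ^ p) (a ^ q)
    rw [← pow_add] at hsuper
    have hℝ : (floorLog g (a ^ p) : ℝ) + floorLog g (a ^ q) ≤ floorLog g (a ^ (p + q)) := by
      exact_mod_cast hsuper
    linarith
  have hbdd : BddBelow (Set.range fun n : ℕ => -(floorLog g (a ^ n) : ℝ) / n) := by
    obtain ⟨k, hk⟩ := hcof a
    refine ⟨-k, Set.forall_mem_range.2 fun n => ?_⟩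
    have : floorLog g (a ^ n) ≤ k * n := by
      simpa [← zpow_natCast, ← zpow_mul, floorLog_zpow hg hcof] using
        floorLog_mono hg hcof (pow_le_pow_left' hk n)
    rcases n.eq_zero_or_pos with rfl | hn
    · simp
    · rw [neg_div, neg_le_neg_iff, div_le_iff₀ (by exact_mod_cast hn)]
      exact_mod_cast this
  exact tendsto_nhds_limUnder ⟨_, by simpa [neg_div] using (hsub.tendsto_lim hbdd).neg⟩

theorem translationNumber_mul (hg : 1 < g) (hcof : ∀ x : K, ∃ n : ℕ, x ≤ g ^ n) (a b : K) :
    translationNumber g (a * b) = translationNumber g a + translationNumber g b := by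
  have hsum := (tendsto_translationNumber hg hcof a).add (tendsto_translationNumber hg hcof b)
  simp only [← add_div] at hsum
  refine tendsto_nhds_unique (tendsto_translationNumber hg hcof (a * b))
    (tendsto_div_of_le_of_le_add (C := 1) hsum (fun n => ?_) fun n => ?_)
  · exact_mod_cast (floorLog_mul_pow_mem_Icc hg hcof a b n).1
  · exact_mod_cast (floorLog_mul_pow_mem_Icc hg hcof a b n).2

theorem translationNumber_mono (hg : 1 < g) (hcof : ∀ x : K, ∃ n : ℕ, x ≤ g ^ n) :
    Monotone (translationNumber g) := fun a b hab =>
  le_of_tendsto_of_tendsto' (tendsto_translationNumber hg hcof a)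
    (tendsto_translationNumber hg hcof b) fun n =>
      div_le_div_of_nonneg_right (by exact_mod_cast floorLog_mono hg hcof (pow_le_pow_left' hab n))
        n.cast_nonneg

theorem translationNumber_self (hg : 1 < g) (hcof : ∀ x : K, ∃ n : ℕ, x ≤ g ^ n) :
    translationNumber g g = 1 := by
  refine tendsto_nhds_unique (tendsto_translationNumber hg hcof g)
    (tendsto_const_nhds.congr' ((eventually_ne_atTop 0).mono fun n hn => ?_))
  show (1 : ℝ) = (floorLog g (g ^ n) : ℝ) / n
  rw [← zpow_natCast, floorLog_zpow hg hcof, Int.cast_natCast, div_self (by exact_mod_cast hn)]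

theorem translationNumber_one (hg : 1 < g) (hcof : ∀ x : K, ∃ n : ℕ, x ≤ g ^ n) :
    translationNumber g 1 = 0 := by
  simpa using translationNumber_mul hg hcof 1 1

theorem translationNumber_inv (hg : 1 < g) (hcof : ∀ x : K, ∃ n : ℕ, x ≤ g ^ n) (a : K) :
    translationNumber g a⁻¹ = -translationNumber g a := by
  have := translationNumber_mul hg hcof a a⁻¹
  rw [mul_inv_cancel, translationNumber_one hg hcof] at this
  linarith

theorem translationNumber_pow (hg : 1 < g) (hcof : ∀ x : K, ∃ n : ℕ, x ≤ g ^ n) (a : K)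
    (n : ℕ) : translationNumber g (a ^ n) = n * translationNumber g a := by
  induction n with
  | zero => simp [translationNumber_one hg hcof]
  | succ n ih => rw [pow_succ, translationNumber_mul hg hcof, ih]; push_cast; ring

theorem translationNumber_conj (hg : 1 < g) (hcof : ∀ x : K, ∃ n : ℕ, x ≤ g ^ n) (h a : K) :
    translationNumber g (h * a * h⁻¹) = translationNumber g a := by
  rw [translationNumber_mul hg hcof, translationNumber_mul hg hcof,
    translationNumber_inv hg hcof]
  ring

theorem translationNumber_eq_zero_iff (hg : 1 < g) (hcof : ∀ x : K, ∃ n : ℕ, x ≤ g ^ n)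
    {a : K} : translationNumber g a = 0 ↔ ∀ n : ℕ, |a|ₘ ^ n < g := by
  have habs : translationNumber g |a|ₘ = 0 ↔ translationNumber g a = 0 := by
    rcases mabs_choice a with h | h <;> simp [h, translationNumber_inv hg hcof]
  have hnonneg : 0 ≤ translationNumber g |a|ₘ := by
    simpa [translationNumber_one hg hcof] using translationNumber_mono hg hcof (one_le_mabs a)
  rw [← habs]
  refine ⟨fun h n => lt_of_not_ge fun hn => ?_, fun h => le_antisymm ?_ hnonneg⟩
  · have := translationNumber_mono hg hcof hn
    rw [translationNumber_self hg hcof, translationNumber_pow hg hcof, h] at this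
    norm_num at this
  · by_contra! hpos
    obtain ⟨n, hn⟩ := exists_nat_gt (translationNumber g |a|ₘ)⁻¹
    have := translationNumber_mono hg hcof (h n).le
    rw [translationNumber_self hg hcof, translationNumber_pow hg hcof] at this
    linarith [(inv_lt_iff_one_lt_mul₀ hpos).1 hn]

end OrderedGroup

/-- If `(N, H)` is a convex jump in an ordered group `G`, then `N` is
normal in `H` and the ordered quotient `H/N` is archimedean, hence order-isomorphic to a
subgroup of `(ℝ, +)`; equivalently there is a monotone group homomorphism `f : H → ℝ`
with kernel exactly `N`. -/
theorem convex_jump_archimedean (G : Type*) [Group G] [LinearOrder G]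
    [CovariantClass G G (· * ·) (· ≤ ·)]
    [CovariantClass G G (Function.swap (· * ·)) (· ≤ ·)]
    (N H : Subgroup G) (hNH : N < H)
    (hN : IsConvexSubgroup (· ≤ ·) N) (hH : IsConvexSubgroup (· ≤ ·) H)
    (hjump : ∀ M : Subgroup G, IsConvexSubgroup (· ≤ ·) M → N ≤ M → M ≤ H →
      M = N ∨ M = H) :
    (∀ h ∈ H, ∀ n ∈ N, h * n * h⁻¹ ∈ N) ∧
    ∃ f : H → ℝ,
      (∀ a b : H, f (a * b) = f a + f b) ∧
      (∀ a b : H, (a : G) ≤ (b : G) → f a ≤ f b) ∧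
      (∀ a : H, f a = 0 ↔ (a : G) ∈ N) := by
  obtain ⟨x₀, hx₀H, hx₀N⟩ := SetLike.exists_of_lt hNH
  let g : H := ⟨|x₀|ₘ, H.mabs_mem_iff.2 hx₀H⟩
  have hgN : (g : G) ∉ N := mt N.mabs_mem_iff.1 hx₀N
  have hg : 1 < g := (one_le_mabs x₀).lt_of_ne fun h => hx₀N (N.mabs_mem_iff.1 (h ▸ N.one_mem))
  have hcof : ∀ x : H, ∃ n : ℕ, x ≤ g ^ n := fun x =>
    exists_le_pow_of_convexJump hN hH hjump (one_le_mabs x₀) g.2 hgN x.2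
  have hker : ∀ a : H, translationNumber g a = 0 ↔ (a : G) ∈ N := fun a => by
    rw [translationNumber_eq_zero_iff hg hcof,
      hN.mem_iff_forall_mabs_pow_lt hH hjump hg.le g.2 hgN a.2]
    rfl
  refine ⟨fun h hh n hn => ?_, translationNumber g, translationNumber_mul hg hcof,
    fun _ _ hab => translationNumber_mono hg hcof hab, hker⟩
  have hn₀ := (hker ⟨n, hNH.le hn⟩).2 hn
  rw [← translationNumber_conj hg hcof ⟨h, hh⟩] at hn₀
  exact (hker _).1 hn₀
end

section
/- Let (G,<) be an ordered group, K a division ring, and K((G,<)) the Malcev-Neumann series field with its natural valuation ω(f) = min supp f. Suppose π : G → A is a surjective homomorphism of ordered groups onto a nontrivial subgroup A of (ℝ,+). Then K((G,<)) is complete with respect to the metric d(f,g) = c^{π(ω(f-g))} for a fixed constant c ∈ (0,1): every Cauchy sequence in K((G,<)) converges. -/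
/-!
A sequence is Cauchy for `d` exactly when, for every level `t`, its coefficients at the
exponents `x` with `π x ≤ t` are eventually constant. The limit takes at each exponent the
eventual coefficient; its support is well-ordered because below any `a` it agrees with the
support of a single term of the sequence. Since `π` is nontrivial its image is unbounded in `ℝ`,
so levels `t` with `c ^ t < ε` exist for every `ε > 0`.
-/

/-- `x` is the minimum of the support of the Malcev-Neumann series `f`
(described through its coefficient function `coeff`). -/
def IsMinSupp {K G D : Type*} [Zero K] [LE G] (coeff : D → G → K) (f : D) (x : G) : Prop :=
  coeff f x ≠ 0 ∧ ∀ y : G, coeff f y ≠ 0 → x ≤ y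

open Function Set

theorem Set.isWF_of_forall_inter_Iic {α : Type*} [Preorder α] {s : Set α}
    (h : ∀ a ∈ s, (s ∩ Iic a).IsWF) : s.IsWF := by
  rw [isWF_iff_no_descending_seq]
  intro f hf hmem
  exact isWF_iff_no_descending_seq.1 (h (f 0) (hmem 0)) f hf
    fun n => ⟨hmem n, hf.antitone (Nat.zero_le n)⟩

section Valuation

variable {K G D : Type*} [AddZeroClass K] [LinearOrder G] [AddZeroClass D]

theorem exists_isMinSupp (φ : D →+ (G → K)) (hφ : Injective φ) {f : D}
    (hwf : (support (φ f)).IsWF) (hf : f ≠ 0) : ∃ x, IsMinSupp φ f x := by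
  have hne : (support (φ f)).Nonempty :=
    support_nonempty_iff.2 fun h => hf (hφ (h.trans (map_zero φ).symm))
  exact ⟨hwf.min hne, hwf.min_mem hne, fun y hy => hwf.min_le hne hy⟩

theorem eq_zero_or_exists_isMinSupp_lt_iff {Λ : Type*} [LinearOrder Λ] {v : G → Λ}
    (hv : Monotone v) (φ : D →+ (G → K)) (hφ : Injective φ) {f : D}
    (hwf : (support (φ f)).IsWF) (t : Λ) :
    (f = 0 ∨ ∃ x, IsMinSupp φ f x ∧ t < v x) ↔ ∀ y, v y ≤ t → φ f y = 0 := by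
  constructor
  · rintro (rfl | ⟨x, ⟨-, hmin⟩, hx⟩) y hy
    · simp
    · by_contra hne
      exact (hy.trans_lt hx).not_ge (hv (hmin y hne))
  · intro h
    refine or_iff_not_imp_left.2 fun hf => ?_
    obtain ⟨x, hx⟩ := exists_isMinSupp φ hφ hwf hf
    exact ⟨x, hx, lt_of_not_ge fun hle => hx.1 (h x hle)⟩

end Valuation

theorem exists_limit_of_eventually_eqOn {K G D Λ : Type*} [Zero K] [Preorder G] [Preorder Λ]
    {v : G → Λ} (hv : Monotone v) (coeff : D → G → K)
    (hwf : ∀ f : D, (support (coeff f)).IsWF)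
    (hsurj : ∀ F : G → K, (support F).IsWF → ∃ f : D, coeff f = F)
    (u : ℕ → D) (N : Λ → ℕ)
    (hN : ∀ t p q, N t ≤ p → N t ≤ q → EqOn (coeff (u p)) (coeff (u q)) {y | v y ≤ t}) :
    ∃ l : D, ∀ t p, N t ≤ p → EqOn (coeff (u p)) (coeff l) {y | v y ≤ t} := by
  set F : G → K := fun g => coeff (u (N (v g))) g
  have hF : ∀ t p, N t ≤ p → EqOn (coeff (u p)) F {y | v y ≤ t} := fun t p hp g hg =>
    (hN t p (max p (N (v g))) hp (hp.trans (le_max_left _ _)) hg).trans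
      (hN (v g) _ _ (le_max_right _ _) le_rfl le_rfl)
  have hFwf : (support F).IsWF := isWF_of_forall_inter_Iic fun a _ =>
    (hwf (u (N (v a)))).mono fun y ⟨hy, hya⟩ => by
      rwa [mem_support, hF (v a) _ le_rfl (hv hya)]
  obtain ⟨l, hl⟩ := hsurj F hFwf
  exact ⟨l, fun t p hp => hl ▸ hF t p hp⟩

theorem exists_lt_of_map_mul {G A : Type*} [Group G] [AddCommGroup A] [LinearOrder A]
    [IsOrderedAddMonoid A] [Archimedean A] {π : G → A} (hπ : ∀ x y, π (x * y) = π x + π y)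
    (hπ_ne : ∃ x, π x ≠ 0) (t : A) : ∃ g, t < π g := by
  let ψ : Additive G →+ A := AddMonoidHom.mk' (fun a => π a.toMul) fun a b => hπ _ _
  obtain ⟨x, hx⟩ := hπ_ne
  obtain ⟨y, hy⟩ : ∃ y, 0 < ψ y := by
    rcases hx.lt_or_gt with hneg | hpos
    · exact ⟨-Additive.ofMul x, by rw [map_neg]; exact neg_pos.2 hneg⟩
    · exact ⟨Additive.ofMul x, hpos⟩
  obtain ⟨n, hn⟩ := Archimedean.arch t hy
  refine ⟨((n + 1) • y).toMul, ?_⟩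
  change t < ψ ((n + 1) • y)
  rw [map_nsmul, succ_nsmul]
  exact hn.trans_lt (lt_add_of_pos_right _ hy)

theorem exists_rpow_lt_of_map_mul {G : Type*} [Group G] {π : G → ℝ}
    (hπ : ∀ x y, π (x * y) = π x + π y) (hπ_ne : ∃ x, π x ≠ 0) {c ε : ℝ} (hc0 : 0 < c)
    (hc1 : c < 1) (hε : 0 < ε) : ∃ g, c ^ π g < ε := by
  obtain ⟨n, hn⟩ := exists_pow_lt_of_lt_one hε hc1
  obtain ⟨g, hg⟩ := exists_lt_of_map_mul hπ hπ_ne n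
  refine ⟨g, lt_of_lt_of_le ?_ hn.le⟩
  rw [← Real.rpow_natCast]
  exact Real.rpow_lt_rpow_of_exponent_gt hc0 hc1 hg

theorem malcev_neumann_complete_general
    (K G D : Type*) [DivisionRing K] [Group G] [LinearOrder G]
    [Ring D] (coeff : D → G → K)
    (hext : Function.Injective coeff)
    (hadd : ∀ f g : D, ∀ x : G, coeff (f + g) x = coeff f x + coeff g x)
    (hwf : ∀ f : D, (Function.support (coeff f)).IsWF)
    (hsurj : ∀ F : G → K, (Function.support F).IsWF → ∃ f : D, coeff f = F)
    (π : G → ℝ)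
    (hπ_hom : ∀ x y : G, π (x * y) = π x + π y)
    (hπ_mono : Monotone π)
    (hπ_nontrivial : ∃ x : G, π x ≠ 0)
    (c : ℝ) (hc0 : 0 < c) (hc1 : c < 1)
    (u : ℕ → D)
    (hu : ∀ ε : ℝ, 0 < ε → ∃ N : ℕ, ∀ p q : ℕ, N ≤ p → N ≤ q →
      (u p - u q = 0 ∨ ∃ x : G, IsMinSupp coeff (u p - u q) x ∧ c ^ (π x) < ε)) :
    ∃ l : D, ∀ ε : ℝ, 0 < ε → ∃ N : ℕ, ∀ p : ℕ, N ≤ p →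
      (u p - l = 0 ∨ ∃ x : G, IsMinSupp coeff (u p - l) x ∧ c ^ (π x) < ε) := by
  let φ : D →+ (G → K) := AddMonoidHom.mk' coeff fun f g => funext (hadd f g)
  have hrpow (a b : ℝ) : c ^ a < c ^ b ↔ b < a :=
    Real.rpow_lt_rpow_left_iff_of_base_lt_one hc0 hc1
  have hlevel (f : D) := eq_zero_or_exists_isMinSupp_lt_iff hπ_mono φ hext (hwf f)
  have hstable : ∀ t : ℝ, ∃ N, ∀ p q, N ≤ p → N ≤ q →
      EqOn (coeff (u p)) (coeff (u q)) {y | π y ≤ t} := by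
    intro t
    obtain ⟨N, hN⟩ := hu (c ^ t) (Real.rpow_pos_of_pos hc0 t)
    refine ⟨N, fun p q hp hq y hy => ?_⟩
    have hsmall := hN p q hp hq
    simp only [hrpow] at hsmall
    have h := (hlevel (u p - u q) t).1 hsmall y hy
    rwa [map_sub, Pi.sub_apply, sub_eq_zero] at h
  choose N hN using hstable
  obtain ⟨l, hl⟩ := exists_limit_of_eventually_eqOn hπ_mono coeff hwf hsurj u N hN
  refine ⟨l, fun ε hε => ?_⟩
  obtain ⟨g, hg⟩ := exists_rpow_lt_of_map_mul hπ_hom hπ_nontrivial hc0 hc1 hε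
  refine ⟨N (π g), fun p hp => ?_⟩
  have h := (hlevel (u p - l) (π g)).2 fun y hy => by
    rw [map_sub, Pi.sub_apply, sub_eq_zero]
    exact hl _ p hp hy
  exact h.imp_right fun ⟨x, hx, hlt⟩ => ⟨x, hx, ((hrpow _ _).2 hlt).trans hg⟩

/-- Let `K((G,<))` be a Malcev-Neumann series field (axiomatised by its
coefficient function) with natural valuation `ω(f) = min supp f`, and let `π : G → ℝ` be a
homomorphism of ordered groups onto a nontrivial subgroup of `(ℝ, +)`.  Then `K((G,<))` is
complete with respect to the metric `d(f,g) = c^(π(ω(f-g)))`, `c ∈ (0,1)` fixed: every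
Cauchy sequence converges. -/
theorem malcev_neumann_complete
    (K G D : Type*) [DivisionRing K] [Group G] [LinearOrder G]
    [CovariantClass G G (· * ·) (· ≤ ·)]
    [CovariantClass G G (Function.swap (· * ·)) (· ≤ ·)]
    [Ring D] (coeff : D → G → K)
    (hext : Function.Injective coeff)
    (hadd : ∀ f g : D, ∀ x : G, coeff (f + g) x = coeff f x + coeff g x)
    (hwf : ∀ f : D, (Function.support (coeff f)).IsWF)
    (hsurj : ∀ F : G → K, (Function.support F).IsWF → ∃ f : D, coeff f = F)
    (hmul : ∀ f g : D, ∀ x : G, coeff (f * g) x =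
      ∑ᶠ p : G × G, if p.1 * p.2 = x then coeff f p.1 * coeff g p.2 else 0)
    (π : G → ℝ)
    (hπ_hom : ∀ x y : G, π (x * y) = π x + π y)
    (hπ_mono : Monotone π)
    (hπ_nontrivial : ∃ x : G, π x ≠ 0)
    (c : ℝ) (hc0 : 0 < c) (hc1 : c < 1)
    (u : ℕ → D)
    (hu : ∀ ε : ℝ, 0 < ε → ∃ N : ℕ, ∀ p q : ℕ, N ≤ p → N ≤ q →
      (u p - u q = 0 ∨ ∃ x : G, IsMinSupp coeff (u p - u q) x ∧ c ^ (π x) < ε)) :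
    ∃ l : D, ∀ ε : ℝ, 0 < ε → ∃ N : ℕ, ∀ p : ℕ, N ≤ p →
      (u p - l = 0 ∨ ∃ x : G, IsMinSupp coeff (u p - l) x ∧ c ^ (π x) < ε) :=
  malcev_neumann_complete_general K G D coeff hext hadd hwf hsurj π hπ_hom hπ_mono hπ_nontrivial c
    hc0 hc1 u hu
end

section
/- Let K be a division ring, (G,<) an ordered group, and f a nonzero element of the center of the Malcev-Neumann series field K((G,<)). Then the support of f is contained in the center Z of the group G. -/
/-!
Commuting with the monomial `y` gives `coeff f (y * z * y⁻¹) = coeff f z`, so conjugation by `y`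
is an order automorphism of `G` mapping the well-ordered support of `f` onto itself. A strictly
monotone self-map of a well-ordered set satisfies `x ≤ φ x`; applied to the conjugation and its
inverse this forces every element of the support to be fixed, i.e. to commute with `y`.
-/

theorem Set.IsWF.le_apply_of_mapsTo {α : Type*} [LinearOrder α] {s : Set α} (hs : s.IsWF)
    {f : α → α} (hf : StrictMono f) (hfs : Set.MapsTo f s s) {x : α} (hx : x ∈ s) : x ≤ f x :=
  haveI : WellFoundedLT s := ⟨hs⟩
  (show StrictMono (hfs.restrict f s s) from fun _ _ h ↦ hf h).id_le ⟨x, hx⟩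

theorem Set.IsWF.apply_eq_of_mapsTo {α : Type*} [LinearOrder α] {s : Set α} (hs : s.IsWF)
    (e : α ≃o α) (he : Set.MapsTo e s s) (he' : Set.MapsTo e.symm s s) {x : α} (hx : x ∈ s) :
    e x = x :=
  le_antisymm (by simpa using hs.le_apply_of_mapsTo e.symm.strictMono he' (he hx))
    (hs.le_apply_of_mapsTo e.strictMono he hx)

section MulConj

variable {G : Type*} [Group G] [LE G] [MulLeftMono G] [MulRightMono G]

def OrderIso.mulConj (y : G) : G ≃o G where
  toFun x := y * x * y⁻¹
  invFun x := y⁻¹ * x * y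
  left_inv x := by group
  right_inv x := by group
  map_rel_iff' := by simp

@[simp]
theorem OrderIso.mulConj_apply (y x : G) : OrderIso.mulConj y x = y * x * y⁻¹ := rfl

@[simp]
theorem OrderIso.mulConj_symm_apply (y x : G) : (OrderIso.mulConj y).symm x = y⁻¹ * x * y := rfl

end MulConj

section SeriesCoefficients

variable {K G D : Type*} [NonAssocSemiring K] [Group G] [DecidableEq G] [Mul D]
  {coeff : D → G → K} {emb : G → D}

theorem coeff_emb_mul
    (hmul : ∀ f g : D, ∀ x : G, coeff (f * g) x =
      ∑ᶠ p : G × G, if p.1 * p.2 = x then coeff f p.1 * coeff g p.2 else 0)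
    (hemb : ∀ g x : G, coeff (emb g) x = if x = g then 1 else 0) (f : D) (y z : G) :
    coeff (emb y * f) (y * z) = coeff f z := by
  rw [hmul, finsum_eq_single _ (y, z) ?_]
  · simp [hemb]
  rintro ⟨a, b⟩ hne
  by_cases hay : a = y
  · subst hay
    simp_all
  · simp [hemb, hay]

theorem coeff_mul_emb
    (hmul : ∀ f g : D, ∀ x : G, coeff (f * g) x =
      ∑ᶠ p : G × G, if p.1 * p.2 = x then coeff f p.1 * coeff g p.2 else 0)
    (hemb : ∀ g x : G, coeff (emb g) x = if x = g then 1 else 0) (f : D) (y z : G) :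
    coeff (f * emb y) (z * y) = coeff f z := by
  rw [hmul, finsum_eq_single _ (z, y) ?_]
  · simp [hemb]
  rintro ⟨a, b⟩ hne
  by_cases hby : b = y
  · subst hby
    simp_all
  · simp [hemb, hby]

theorem coeff_conj_of_commute
    (hmul : ∀ f g : D, ∀ x : G, coeff (f * g) x =
      ∑ᶠ p : G × G, if p.1 * p.2 = x then coeff f p.1 * coeff g p.2 else 0)
    (hemb : ∀ g x : G, coeff (emb g) x = if x = g then 1 else 0) {f : D} {y : G}
    (hy : emb y * f = f * emb y) (z : G) :
    coeff f (y * z * y⁻¹) = coeff f z := by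
  rw [← coeff_emb_mul hmul hemb f y z, hy, ← coeff_mul_emb hmul hemb f y, inv_mul_cancel_right]

end SeriesCoefficients

theorem central_series_support_in_center_general
    (K G D : Type*) [DivisionRing K] [Group G] [LinearOrder G]
    [CovariantClass G G (· * ·) (· ≤ ·)]
    [CovariantClass G G (Function.swap (· * ·)) (· ≤ ·)]
    [Ring D] (coeff : D → G → K)
    (hwf : ∀ f : D, (Function.support (coeff f)).IsWF)
    (hmul : ∀ f g : D, ∀ x : G, coeff (f * g) x =
      ∑ᶠ p : G × G, if p.1 * p.2 = x then coeff f p.1 * coeff g p.2 else 0)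
    (emb : G → D) (hemb : ∀ g x : G, coeff (emb g) x = if x = g then 1 else 0)
    (f : D) (hf : ∀ d : D, d * f = f * d) :
    ∀ x : G, coeff f x ≠ 0 → x ∈ Subgroup.center G := by
  intro x hx
  refine Subgroup.mem_center_iff.2 fun y ↦ (eq_mul_inv_iff_mul_eq.1 ?_).symm
  have hsupp (y : G) : Set.MapsTo (OrderIso.mulConj y) (Function.support (coeff f))
      (Function.support (coeff f)) := fun z hz ↦ by
    rwa [Function.mem_support, OrderIso.mulConj_apply, coeff_conj_of_commute hmul hemb (hf _)]
  refine ((hwf f).apply_eq_of_mapsTo (OrderIso.mulConj y) (hsupp y) (fun z hz ↦ ?_) hx).symm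
  simpa using hsupp y⁻¹ hz

/-- Let `K` be a division ring, `(G,<)` an ordered group, and `f` a
nonzero element of the centre of the Malcev-Neumann series field `K((G,<))`
(axiomatised by its coefficient function `coeff` and the embedding `emb` of `G`).
Then the support of `f` is contained in the centre of `G`. -/
theorem central_series_support_in_center
    (K G D : Type*) [DivisionRing K] [Group G] [LinearOrder G]
    [CovariantClass G G (· * ·) (· ≤ ·)]
    [CovariantClass G G (Function.swap (· * ·)) (· ≤ ·)]
    [Ring D] (coeff : D → G → K)
    (hext : Function.Injective coeff)
    (hadd : ∀ f g : D, ∀ x : G, coeff (f + g) x = coeff f x + coeff g x)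
    (hwf : ∀ f : D, (Function.support (coeff f)).IsWF)
    (hsurj : ∀ F : G → K, (Function.support F).IsWF → ∃ f : D, coeff f = F)
    (hmul : ∀ f g : D, ∀ x : G, coeff (f * g) x =
      ∑ᶠ p : G × G, if p.1 * p.2 = x then coeff f p.1 * coeff g p.2 else 0)
    (emb : G → D) (hemb : ∀ g x : G, coeff (emb g) x = if x = g then 1 else 0)
    (f : D) (hf0 : f ≠ 0) (hf : ∀ d : D, d * f = f * d) :
    ∀ x : G, coeff f x ≠ 0 → x ∈ Subgroup.center G :=
  central_series_support_in_center_general K G D coeff hwf hmul emb hemb f hf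
end

section
/- Let F be a commutative field and K a commutative field extension of F. If A is an amenable F-algebra (an F-algebra satisfying the Følner-type condition of Elek), then K ⊗_F A is an amenable K-algebra. -/
open scoped TensorProduct

/-- An `F`-algebra `A` is amenable (in the sense of Elek) if for every finite subset
`{r₁, …, rₙ} ⊆ A` and every `ε > 0` there is a nonzero finite-dimensional `F`-subspace
`V` of `A` with `dim_F (Σᵢ rᵢ V) < (1 + ε) · dim_F V`. -/
def IsAmenableAlgebra (F A : Type*) [Field F] [Ring A] [Algebra F A] : Prop :=
  ∀ (s : Finset A) (ε : ℝ), 0 < ε →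
    ∃ V : Submodule F A, V ≠ ⊥ ∧ FiniteDimensional F ↥V ∧
      (Module.finrank F ↥(⨆ r ∈ s, V.map (LinearMap.mulLeft F r)) : ℝ) <
        (1 + ε) * (Module.finrank F ↥V : ℝ)

/-!
Write each `r ∈ s` as `∑ kᵢ ⊗ aᵢ` and let `t ⊆ A` collect all the `aᵢ`. If `V` is a Følner
subspace of `A` for `t`, then `r · (K ⊗ V) ⊆ K ⊗ (∑_{a ∈ t} a V)` for every `r ∈ s`, and
base change along the field extension `K/F` preserves dimensions, so `K ⊗ V` is a Følner
subspace of `K ⊗ A` for `s` with the same ratio.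
-/

namespace Submodule

open TensorProduct

instance finite_biSup_finset {R M ι : Type*} [Ring R] [AddCommGroup M] [Module R M]
    (s : Finset ι) (S : ι → Submodule R M) [∀ i, Module.Finite R (S i)] :
    Module.Finite R ↥(⨆ i ∈ s, S i) :=
  s.sup_eq_iSup S ▸ finite_finset_sup s S

section Field

variable {F K M : Type*} [Field F] [Field K] [Algebra F K] [AddCommGroup M] [Module F M]
  (V : Submodule F M)

instance finite_baseChange [Module.Finite F V] : Module.Finite K (V.baseChange K) :=
  .equiv (toBaseChange.toLinearEquiv K V)

theorem finrank_baseChange : Module.finrank K (V.baseChange K) = Module.finrank F V := by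
  rw [← (toBaseChange.toLinearEquiv K V).finrank_eq, Module.finrank_baseChange]

theorem baseChange_eq_bot_iff : V.baseChange K = ⊥ ↔ V = ⊥ := by
  rw [← rank_eq_zero, ← rank_eq_zero, ← (toBaseChange.toLinearEquiv K V).rank_eq,
    Module.rank_baseChange, Cardinal.lift_eq_zero]

end Field

theorem map_mulLeft_baseChange_le {R K A : Type*} [CommSemiring R] [CommSemiring K] [Algebra R K]
    [Semiring A] [Algebra R A] {V U : Submodule R A} (p : Finset (K × A))
    (hp : ∀ q ∈ p, V.map (LinearMap.mulLeft R q.2) ≤ U) :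
    (V.baseChange K).map (LinearMap.mulLeft K (∑ q ∈ p, q.1 ⊗ₜ[R] q.2)) ≤ U.baseChange K := by
  rw [map_le_iff_le_comap, baseChange_eq_span, span_le]
  rintro _ ⟨v, hv, rfl⟩
  simp only [SetLike.mem_coe, mem_comap, LinearMap.mulLeft_apply, mk_apply, Finset.sum_mul,
    Algebra.TensorProduct.tmul_mul_tmul, mul_one]
  exact sum_mem fun q hq => tmul_mem_baseChange_of_mem _ (hp q hq ⟨v, hv, rfl⟩)

end Submodule

/-- If `K` is a commutative field extension of `F` and `A` is an
amenable `F`-algebra, then `K ⊗_F A` is an amenable `K`-algebra. -/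
theorem amenable_base_change (F K A : Type*) [Field F] [Field K] [Algebra F K]
    [Ring A] [Algebra F A] (h : IsAmenableAlgebra F A) :
    IsAmenableAlgebra K (K ⊗[F] A) := by
  classical
  intro s ε hε
  choose rep hrep using fun r : K ⊗[F] A => TensorProduct.exists_finset r
  set t := s.biUnion fun r => (rep r).image Prod.snd
  obtain ⟨V, hV, _, hlt⟩ := h t ε hε
  set U := ⨆ a ∈ t, V.map (LinearMap.mulLeft F a)
  have hle : ⨆ r ∈ s, (V.baseChange K).map (LinearMap.mulLeft K r) ≤ U.baseChange K :=
    iSup₂_le fun r hr => hrep r ▸ Submodule.map_mulLeft_baseChange_le (rep r) fun q hq =>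
      le_biSup (fun a => V.map (LinearMap.mulLeft F a))
        (Finset.mem_biUnion.2 ⟨r, hr, Finset.mem_image_of_mem _ hq⟩)
  refine ⟨V.baseChange K, (Submodule.baseChange_eq_bot_iff V).not.2 hV, inferInstance, ?_⟩
  calc (Module.finrank K ↥(⨆ r ∈ s, (V.baseChange K).map (LinearMap.mulLeft K r)) : ℝ)
      ≤ Module.finrank K (U.baseChange K) := Nat.cast_le.2 (Submodule.finrank_mono hle)
    _ = Module.finrank F U := by rw [Submodule.finrank_baseChange]
    _ < (1 + ε) * Module.finrank F V := hlt
    _ = (1 + ε) * Module.finrank K (V.baseChange K) := by rw [Submodule.finrank_baseChange]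
end

section
/- Let D be a division ring that is a k-algebra over a commutative field k. If D ⊗_k D^op is left noetherian, then D does not contain an infinite strictly ascending chain D₁ ⊊ D₂ ⊊ D₃ ⊊ ⋯ of division subrings that are k-subalgebras. -/
/-!
For a division subring `S ⊇ k` of `D`, let `J(S)` be the left ideal of `D ⊗_k Dᵐᵒᵖ` generated by
the elements `t ⊗ 1 - 1 ⊗ tᵒᵖ`, `t ∈ S`. Choosing a left `S`-linear retraction `g : D → S` with
`g 1 = 1`, the functional `x ⊗ yᵒᵖ ↦ x g(y)` kills `b (t ⊗ 1 - 1 ⊗ tᵒᵖ)` for all `b` and `t ∈ S`,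
hence kills `J(S)`, while it sends `s ⊗ 1 - 1 ⊗ sᵒᵖ` to `s - g(s)`. So `s ⊗ 1 - 1 ⊗ sᵒᵖ ∈ J(S)`
forces `s ∈ S`, and `S ↦ J(S)` is an order embedding: a strictly ascending chain of `S`'s gives one
of left ideals.
-/

open scoped TensorProduct
open MulOpposite

theorem AddMonoidHom.map_eq_zero_of_mem_ideal_span {A M : Type*} [Semiring A] [AddCommMonoid M]
    (φ : A →+ M) {s : Set A} (hs : ∀ b, ∀ x ∈ s, φ (b * x) = 0) {z : A}
    (hz : z ∈ Ideal.span s) : φ z = 0 := by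
  let I : Ideal A :=
    { carrier := {z | ∀ b, φ (b * z) = 0}
      add_mem' := fun hx hy b => by simp [mul_add, hx b, hy b]
      zero_mem' := fun b => by simp
      smul_mem' := fun a x hx b => by simpa [mul_assoc] using hx (b * a) }
  simpa using (Ideal.span_le.mpr (fun x hx b => hs b x hx) : Ideal.span s ≤ I) hz 1

section

variable (k : Type*) {D : Type*} [Field k] [DivisionRing D] [Algebra k D]

def diagonalElement (s : D) : D ⊗[k] Dᵐᵒᵖ := s ⊗ₜ 1 - 1 ⊗ₜ op s

def Subfield.diagonalIdeal (S : Subfield D) : Ideal (D ⊗[k] Dᵐᵒᵖ) :=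
  Ideal.span (diagonalElement k '' S)

variable {k}

theorem Subfield.exists_retraction (S : Subfield D) : ∃ g : D →ₗ[S] S, g 1 = 1 := by
  obtain ⟨g, hg⟩ := LinearMap.exists_leftInverse_of_injective (LinearMap.toSpanSingleton S D 1)
    (LinearMap.ker_eq_bot.mpr fun a b h => by simpa using h)
  exact ⟨g, by simpa using LinearMap.congr_fun hg 1⟩

def LinearMap.restrictScalarsSubfield {S : Subfield D} (hk : ∀ a : k, algebraMap k D a ∈ S)
    (g : D →ₗ[S] S) : D →ₗ[k] D where
  toFun y := g y
  map_add' y z := by simp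
  map_smul' a y := by
    have : a • y = (⟨_, hk a⟩ : S) • y := Algebra.smul_def a y
    rw [this, g.map_smul, Algebra.smul_def]
    rfl

theorem Subfield.mem_of_diagonalElement_mem_diagonalIdeal {S : Subfield D}
    (hk : ∀ a : k, algebraMap k D a ∈ S) {s : D}
    (hs : diagonalElement k s ∈ S.diagonalIdeal k) : s ∈ S := by
  obtain ⟨g, hg⟩ := S.exists_retraction
  let ψ : D ⊗[k] Dᵐᵒᵖ →ₗ[k] D := TensorProduct.lift <| (LinearMap.mul k D).compl₂ <|
    g.restrictScalarsSubfield hk ∘ₗ (opLinearEquiv k).symm.toLinearMap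
  have hψ : ∀ x y, ψ (x ⊗ₜ y) = x * g y.unop := fun _ _ => rfl
  have hkill : ∀ b, ∀ t ∈ S, ψ (b * diagonalElement k t) = 0 := by
    intro b t ht
    induction b using TensorProduct.induction_on with
    | zero => simp
    | tmul u v =>
      have hgt : g (t * v.unop) = ⟨t, ht⟩ * g v.unop := g.map_smul ⟨t, ht⟩ v.unop
      simp [diagonalElement, mul_sub, hψ, hgt, mul_assoc]
    | add u v hu hv => rw [add_mul, map_add, hu, hv, add_zero]
  have hψs : ψ (diagonalElement k s) = 0 := by
    refine ψ.toAddMonoidHom.map_eq_zero_of_mem_ideal_span ?_ hs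
    rintro b _ ⟨t, ht, rfl⟩
    exact hkill b t ht
  have hs_eq : s = g s := by simpa [diagonalElement, hψ, hg, sub_eq_zero] using hψs
  exact hs_eq ▸ (g s).2

theorem Subfield.diagonalIdeal_le_diagonalIdeal_iff {S T : Subfield D}
    (hT : ∀ a : k, algebraMap k D a ∈ T) :
    S.diagonalIdeal k ≤ T.diagonalIdeal k ↔ S ≤ T :=
  ⟨fun h s hs => T.mem_of_diagonalElement_mem_diagonalIdeal hT <|
      h <| Ideal.subset_span ⟨s, hs, rfl⟩,
    fun h => Ideal.span_mono (Set.image_mono h)⟩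

end

/-- **Sweedler's lemma.** Let `D` be a division ring which is a
`k`-algebra over a commutative field `k`.  If `D ⊗_k D^op` is left noetherian, then `D`
contains no infinite strictly ascending chain of division subrings which are
`k`-subalgebras. -/
theorem no_ascending_chain_of_division_subalgebras (k D : Type*) [Field k]
    [DivisionRing D] [Algebra k D]
    (h : IsNoetherianRing (D ⊗[k] Dᵐᵒᵖ)) :
    ¬ ∃ S : ℕ → Subfield D,
        (∀ n : ℕ, ∀ a : k, algebraMap k D a ∈ S n) ∧ StrictMono S := by
  rintro ⟨S, hk, hS⟩
  refine not_strictMono_of_wellFoundedGT (fun n => (S n).diagonalIdeal k) fun m n hmn => ?_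
  rw [lt_iff_le_not_ge, Subfield.diagonalIdeal_le_diagonalIdeal_iff (hk n),
    Subfield.diagonalIdeal_le_diagonalIdeal_iff (hk m)]
  exact lt_iff_le_not_ge.mp (hS hmn)
end

section
/- Let D be a division ring with a valuation ν : D → G ∪ {∞} onto an ordered group G. Let K be a division subring of D equal to its own bicentralizer, with centralizer K', and assume the left K-space KcK' is infinite-dimensional over K for every nonzero c ∈ D. Then L = {u ∈ K' : ν(u) = 1} is a normal subgroup of the multiplicative group K'^× and L is not contained in K. -/
/-!
If the elements of `K'` of value `1` all lay in `K`, then so would every `x ∈ K'`: when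
`ν x > 1` the element `1 - x` has value `1`, and when `ν x < 1` the same applies to `x⁻¹`.
Hence `K' ⊆ K`, so `K · 1 · K' ⊆ K` is one-dimensional over `K`, contradicting the
infinite-dimensionality hypothesis.
-/

/-- The value `ν 0` stands for `∞` and is left unconstrained. -/
structure IsValuationOnNonzero {D G : Type*} [DivisionRing D] [Group G] [LinearOrder G]
    (ν : D → G) : Prop where
  map_mul : ∀ a b : D, a ≠ 0 → b ≠ 0 → ν (a * b) = ν a * ν b
  min_le_map_add : ∀ a b : D, a ≠ 0 → b ≠ 0 → a + b ≠ 0 → min (ν a) (ν b) ≤ ν (a + b)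

namespace IsValuationOnNonzero

variable {D G : Type*} [DivisionRing D] [Group G] [LinearOrder G] {ν : D → G}

theorem map_one (hν : IsValuationOnNonzero ν) : ν 1 = 1 := by
  simpa using hν.map_mul 1 1 one_ne_zero one_ne_zero

theorem map_inv (hν : IsValuationOnNonzero ν) {a : D} (ha : a ≠ 0) : ν a⁻¹ = (ν a)⁻¹ := by
  refine eq_inv_of_mul_eq_one_right ?_
  rw [← hν.map_mul a a⁻¹ ha (inv_ne_zero ha), mul_inv_cancel₀ ha, hν.map_one]

variable [MulLeftMono G]

theorem map_neg_one (hν : IsValuationOnNonzero ν) : ν (-1 : D) = 1 := by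
  have hsq : ν (-1 : D) * ν (-1 : D) = 1 := by
    rw [← hν.map_mul _ _ (neg_ne_zero.mpr one_ne_zero) (neg_ne_zero.mpr one_ne_zero),
      neg_mul_neg, one_mul, hν.map_one]
  rcases lt_trichotomy (ν (-1 : D)) 1 with hlt | heq | hgt
  · exact absurd hsq ((mul_lt_of_lt_one_right' _ hlt).trans hlt).ne
  · exact heq
  · exact absurd hsq (hgt.trans (lt_mul_of_one_lt_right' _ hgt)).ne'

theorem map_neg (hν : IsValuationOnNonzero ν) {a : D} (ha : a ≠ 0) : ν (-a) = ν a := by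
  rw [← neg_one_mul, hν.map_mul _ _ (neg_ne_zero.mpr one_ne_zero) ha, hν.map_neg_one, one_mul]

theorem map_one_sub_of_one_lt (hν : IsValuationOnNonzero ν) {x : D} (hx0 : x ≠ 0)
    (hx : 1 < ν x) : 1 - x ≠ 0 ∧ ν (1 - x) = 1 := by
  have hsub : 1 - x ≠ 0 := by
    rintro h
    rw [← sub_eq_zero.mp h, hν.map_one] at hx
    exact hx.false
  refine ⟨hsub, le_antisymm ?_ ?_⟩
  · have h := hν.min_le_map_add (1 - x) x hsub hx0 (by simp)
    rw [sub_add_cancel, hν.map_one] at h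
    exact (min_le_iff.mp h).resolve_right hx.not_ge
  · have h := hν.min_le_map_add 1 (-x) one_ne_zero (neg_ne_zero.mpr hx0)
      (by rwa [← sub_eq_add_neg])
    rwa [hν.map_one, hν.map_neg hx0, min_eq_left hx.le, ← sub_eq_add_neg] at h

theorem centralizer_le_of_forall_map_eq_one_mem (hν : IsValuationOnNonzero ν)
    (s : Set D) (K : Subfield D) (hL : ∀ u ∈ Subring.centralizer s, u ≠ 0 → ν u = 1 → u ∈ K) :
    Subring.centralizer s ≤ K.toSubring := by
  have of_one_lt : ∀ x ∈ Subring.centralizer s, x ≠ 0 → 1 < ν x → x ∈ K := by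
    intro x hx hx0 hgt
    obtain ⟨hsub, hν_sub⟩ := hν.map_one_sub_of_one_lt hx0 hgt
    have h1x : 1 - x ∈ K := hL _ (Subring.sub_mem _ (Subring.one_mem _) hx) hsub hν_sub
    simpa using K.sub_mem K.one_mem h1x
  intro x hx
  rcases eq_or_ne x 0 with rfl | hx0
  · exact K.zero_mem
  rcases lt_trichotomy (ν x) 1 with hlt | heq | hgt
  · have hinv : 1 < ν x⁻¹ := by
      rw [hν.map_inv hx0]
      exact Left.one_lt_inv_iff.mpr hlt
    simpa using K.inv_mem (of_one_lt x⁻¹ (Set.inv_mem_centralizer₀ hx) (inv_ne_zero hx0) hinv)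
  · exact hL x hx hx0 heq
  · exact of_one_lt x hx hx0 hgt

end IsValuationOnNonzero

theorem Subfield.exists_ne_zero_sum_mul_eq_zero_of_fin_two {D : Type*} [DivisionRing D]
    (K : Subfield D) (v : Fin 2 → D) (hv : ∀ i, v i ∈ K) :
    ∃ a : Fin 2 → D, (∀ i, a i ∈ K) ∧ ∑ i, a i * v i = 0 ∧ ∃ i, a i ≠ 0 := by
  by_cases h0 : v 0 = 0
  · refine ⟨![1, 0], fun i => ?_, by simp [h0], 0, by simp⟩
    fin_cases i
    exacts [K.one_mem, K.zero_mem]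
  · refine ⟨![v 1 * (v 0)⁻¹, -1], fun i => ?_, ?_, 1, by simp⟩
    · fin_cases i
      exacts [K.mul_mem (hv 1) (K.inv_mem (hv 0)), K.neg_mem K.one_mem]
    · simp [mul_assoc, inv_mul_cancel₀ h0]

theorem valuation_one_subgroup_normal_not_in_K_general
    (D G : Type*) [DivisionRing D] [Group G] [LinearOrder G]
    [CovariantClass G G (· * ·) (· ≤ ·)]
    (ν : D → G)
    (hν_mul : ∀ a b : D, a ≠ 0 → b ≠ 0 → ν (a * b) = ν a * ν b)
    (hν_add : ∀ a b : D, a ≠ 0 → b ≠ 0 → a + b ≠ 0 → min (ν a) (ν b) ≤ ν (a + b))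
    (K : Subfield D)
    (hKcK' : ∀ c : D, c ≠ 0 → ∀ n : ℕ, ∃ v : Fin n → D,
      (∀ i, ∃ k ∈ K, ∃ k' ∈ Subring.centralizer (K : Set D), v i = k * c * k') ∧
      ∀ a : Fin n → D, (∀ i, a i ∈ K) → (∑ i, a i * v i = 0) → ∀ i, a i = 0) :
    ((1 : D) ∈ {u : D | u ∈ Subring.centralizer (K : Set D) ∧ u ≠ 0 ∧ ν u = 1}) ∧
    (∀ u ∈ {u : D | u ∈ Subring.centralizer (K : Set D) ∧ u ≠ 0 ∧ ν u = 1},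
     ∀ v ∈ {u : D | u ∈ Subring.centralizer (K : Set D) ∧ u ≠ 0 ∧ ν u = 1},
      u * v ∈ {u : D | u ∈ Subring.centralizer (K : Set D) ∧ u ≠ 0 ∧ ν u = 1}) ∧
    (∀ u ∈ {u : D | u ∈ Subring.centralizer (K : Set D) ∧ u ≠ 0 ∧ ν u = 1},
      u⁻¹ ∈ {u : D | u ∈ Subring.centralizer (K : Set D) ∧ u ≠ 0 ∧ ν u = 1}) ∧
    (∀ u ∈ {u : D | u ∈ Subring.centralizer (K : Set D) ∧ u ≠ 0 ∧ ν u = 1},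
      ∀ w : D, w ∈ Subring.centralizer (K : Set D) → w ≠ 0 →
        w * u * w⁻¹ ∈ {u : D | u ∈ Subring.centralizer (K : Set D) ∧ u ≠ 0 ∧ ν u = 1}) ∧
    ¬ (∀ u ∈ {u : D | u ∈ Subring.centralizer (K : Set D) ∧ u ≠ 0 ∧ ν u = 1},
        u ∈ K) := by
  have hν : IsValuationOnNonzero ν := ⟨hν_mul, hν_add⟩
  refine ⟨⟨Subring.one_mem _, one_ne_zero, hν.map_one⟩, ?_, ?_, ?_, ?_⟩
  · rintro u ⟨huC, hu0, huν⟩ v ⟨hvC, hv0, hvν⟩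
    exact ⟨Subring.mul_mem _ huC hvC, mul_ne_zero hu0 hv0,
      by rw [hν.map_mul u v hu0 hv0, huν, hvν, one_mul]⟩
  · rintro u ⟨huC, hu0, huν⟩
    exact ⟨Set.inv_mem_centralizer₀ huC, inv_ne_zero hu0, by rw [hν.map_inv hu0, huν, inv_one]⟩
  · rintro u ⟨huC, hu0, huν⟩ w hwC hw0
    refine ⟨Subring.mul_mem _ (Subring.mul_mem _ hwC huC) (Set.inv_mem_centralizer₀ hwC),
      mul_ne_zero (mul_ne_zero hw0 hu0) (inv_ne_zero hw0), ?_⟩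
    rw [hν.map_mul _ _ (mul_ne_zero hw0 hu0) (inv_ne_zero hw0), hν.map_mul _ _ hw0 hu0, huν, mul_one,
      hν.map_inv hw0, mul_inv_cancel]
  · intro hL
    have hK'K := hν.centralizer_le_of_forall_map_eq_one_mem (K : Set D) K
      fun u hu hu0 huν => hL u ⟨hu, hu0, huν⟩
    obtain ⟨v, hv_mem, hv_indep⟩ := hKcK' 1 one_ne_zero 2
    have hvK : ∀ i, v i ∈ K := fun i => by
      obtain ⟨k, hk, k', hk', hvi⟩ := hv_mem i
      exact hvi ▸ K.mul_mem (K.mul_mem hk K.one_mem) (hK'K hk')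
    obtain ⟨a, haK, hsum, i, hai⟩ := K.exists_ne_zero_sum_mul_eq_zero_of_fin_two v hvK
    exact hai (hv_indep a haK hsum i)

/-- Let `D` be a division ring with a valuation `ν` onto an ordered
group `G` (written multiplicatively).  Let `K` be a division subring of `D` equal to its
own bicentralizer, whose centralizer `K'` is such that the left `K`-space `K·c·K'` is
infinite-dimensional over `K` for every nonzero `c ∈ D`.  Then
`L = {u ∈ K' : ν u = 1}` is a normal subgroup of `K'ˣ` not contained in `K`. -/
theorem valuation_one_subgroup_normal_not_in_K
    (D G : Type*) [DivisionRing D] [Group G] [LinearOrder G]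
    [CovariantClass G G (· * ·) (· ≤ ·)]
    [CovariantClass G G (Function.swap (· * ·)) (· ≤ ·)]
    (ν : D → G)
    (hν_mul : ∀ a b : D, a ≠ 0 → b ≠ 0 → ν (a * b) = ν a * ν b)
    (hν_add : ∀ a b : D, a ≠ 0 → b ≠ 0 → a + b ≠ 0 → min (ν a) (ν b) ≤ ν (a + b))
    (hν_surj : ∀ g : G, ∃ a : D, a ≠ 0 ∧ ν a = g)
    (K : Subfield D)
    (hbicent : Subring.centralizer (Subring.centralizer (K : Set D) : Set D) = K.toSubring)
    (hKcK' : ∀ c : D, c ≠ 0 → ∀ n : ℕ, ∃ v : Fin n → D,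
      (∀ i, ∃ k ∈ K, ∃ k' ∈ Subring.centralizer (K : Set D), v i = k * c * k') ∧
      ∀ a : Fin n → D, (∀ i, a i ∈ K) → (∑ i, a i * v i = 0) → ∀ i, a i = 0) :
    ((1 : D) ∈ {u : D | u ∈ Subring.centralizer (K : Set D) ∧ u ≠ 0 ∧ ν u = 1}) ∧
    (∀ u ∈ {u : D | u ∈ Subring.centralizer (K : Set D) ∧ u ≠ 0 ∧ ν u = 1},
     ∀ v ∈ {u : D | u ∈ Subring.centralizer (K : Set D) ∧ u ≠ 0 ∧ ν u = 1},
      u * v ∈ {u : D | u ∈ Subring.centralizer (K : Set D) ∧ u ≠ 0 ∧ ν u = 1}) ∧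
    (∀ u ∈ {u : D | u ∈ Subring.centralizer (K : Set D) ∧ u ≠ 0 ∧ ν u = 1},
      u⁻¹ ∈ {u : D | u ∈ Subring.centralizer (K : Set D) ∧ u ≠ 0 ∧ ν u = 1}) ∧
    (∀ u ∈ {u : D | u ∈ Subring.centralizer (K : Set D) ∧ u ≠ 0 ∧ ν u = 1},
      ∀ w : D, w ∈ Subring.centralizer (K : Set D) → w ≠ 0 →
        w * u * w⁻¹ ∈ {u : D | u ∈ Subring.centralizer (K : Set D) ∧ u ≠ 0 ∧ ν u = 1}) ∧
    ¬ (∀ u ∈ {u : D | u ∈ Subring.centralizer (K : Set D) ∧ u ≠ 0 ∧ ν u = 1},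
        u ∈ K) :=
  valuation_one_subgroup_normal_not_in_K_general D G ν hν_mul hν_add K hKcK'
end
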